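/- arXiv:1209.3493 — 2 statements merged into one kernel-verified Lean document; each statement's English description precedes it below -/
import Mathlib

section
/- For 0 <= i <= n, the adjacency matrix A of SR(3,n) satisfies A X_i = (n-i-2) X_i + sum_{j=0}^{n-i} (Y_j + Z_j). -/
/-
Two distinct vertices of SR(3,n) agree in at most one coordinate, since any two coordinates
determine the third, and they are adjacent exactly when they agree in one. Hence
A = L₀ + L₁ + L₂ - 3I with L_k(u,v) = [u_k = v_k]. Now L₀ X_i = (n-i+1) X_i because the line
u₀ = i has n-i+1 points, and L₁ X_i = ∑_{j ≤ n-i} Y_j because the lines u₀ = i and u₁ = j meet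
(in a single point) iff i + j ≤ n; likewise L₂ X_i = ∑_{j ≤ n-i} Z_j.
-/

open Finset

abbrev SRVert (d n : ℕ) : Type := {x : Fin d → ℕ // ∑ i, x i = n}

noncomputable instance SRVert.fintype (d n : ℕ) : Fintype (SRVert d n) :=
  Fintype.ofInjective
    (fun x : SRVert d n => fun i => (⟨x.1 i, by
      have h := Finset.single_le_sum (f := x.1)
        (fun j _ => Nat.zero_le (x.1 j)) (Finset.mem_univ i)
      have h2 := x.2
      omega⟩ : Fin (n+1)))
    (fun x y h => Subtype.ext (funext fun i => congrArg Fin.val (congrFun h i)))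

/-- The simplicial rook graph: two vertices are adjacent if they differ in
exactly two coordinates. -/
def SR (d n : ℕ) : SimpleGraph (SRVert d n) where
  Adj x y := (Finset.univ.filter fun i => x.1 i ≠ y.1 i).card = 2
  symm := ⟨by
    intro x y h
    beta_reduce at h ⊢
    rw [show (Finset.univ.filter fun i => y.1 i ≠ x.1 i)
        = (Finset.univ.filter fun i => x.1 i ≠ y.1 i) by
      apply Finset.filter_congr; intro i _; simp [ne_comm]]
    exact h⟩
  loopless := ⟨by intro z h; simp at h⟩

instance (d n : ℕ) : DecidableRel (SR d n).Adj :=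
  fun x y => inferInstanceAs (Decidable (_ = 2))


/-- Characteristic vector of the lattice line `{v : v₀ = i}` in `ℝ^{V(3,n)}`. -/
def Xv (n i : ℕ) : SRVert 3 n → ℝ := fun v => if v.1 0 = i then 1 else 0

/-- Characteristic vector of the lattice line `{v : v₁ = j}`. -/
def Yv (n j : ℕ) : SRVert 3 n → ℝ := fun v => if v.1 1 = j then 1 else 0

/-- Characteristic vector of the lattice line `{v : v₂ = k}`. -/
def Zv (n k : ℕ) : SRVert 3 n → ℝ := fun v => if v.1 2 = k then 1 else 0

/-- The all-ones vector. -/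
def Jv (n : ℕ) : SRVert 3 n → ℝ := fun _ => 1

/-- Standard basis vector `e_v`. -/
def ev {d n : ℕ} (v : SRVert d n) : SRVert d n → ℝ := fun w => if w = v then 1 else 0

open Matrix

namespace SRVert

variable {n : ℕ}

theorem coord_add_coord_le {d : ℕ} (v : SRVert d n) {a b : Fin d} (hab : a ≠ b) :
    v.1 a + v.1 b ≤ n := by
  calc v.1 a + v.1 b = ∑ k ∈ {a, b}, v.1 k := (sum_pair hab).symm
    _ ≤ ∑ k, v.1 k := sum_le_sum_of_subset (subset_univ _)
    _ = n := v.2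

theorem coord_zero_add_one_add_two (v : SRVert 3 n) : v.1 0 + v.1 1 + v.1 2 = n := by
  simpa [Fin.sum_univ_three] using v.2

theorem eq_of_coord_eq_of_coord_eq {u v : SRVert 3 n} {a b : Fin 3} (hab : a ≠ b)
    (ha : u.1 a = v.1 a) (hb : u.1 b = v.1 b) : u = v := by
  have hu := u.coord_zero_add_one_add_two
  have hv := v.coord_zero_add_one_add_two
  refine Subtype.ext (funext fun k => ?_)
  fin_cases a <;> fin_cases b <;> fin_cases k <;> simp_all <;> omega

theorem exists_coord_eq_coord_eq {a b : Fin 3} (hab : a ≠ b) {i j : ℕ} (h : i + j ≤ n) :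
    ∃ u : SRVert 3 n, u.1 a = i ∧ u.1 b = j := by
  refine ⟨⟨fun k => if k = a then i else if k = b then j else n - i - j, ?_⟩, by simp,
    by simp [hab.symm]⟩
  fin_cases a <;> fin_cases b <;> simp_all [Fin.sum_univ_three] <;> omega

theorem card_coord_eq_coord_eq {a b : Fin 3} (hab : a ≠ b) (i j : ℕ) :
    #{u : SRVert 3 n | u.1 a = i ∧ u.1 b = j} = if i + j ≤ n then 1 else 0 := by
  split_ifs with h
  · obtain ⟨u, hu⟩ := exists_coord_eq_coord_eq hab h
    refine card_eq_one.mpr ⟨u, eq_singleton_iff_unique_mem.mpr ⟨by simpa using hu, ?_⟩⟩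
    intro w hw
    simp only [mem_filter, mem_univ, true_and] at hw
    exact eq_of_coord_eq_of_coord_eq hab (hw.1.trans hu.1.symm) (hw.2.trans hu.2.symm)
  · refine card_eq_zero.mpr (filter_eq_empty_iff.mpr fun u _ ⟨hi, hj⟩ => h ?_)
    simpa [hi, hj] using u.coord_add_coord_le hab

theorem card_coord_eq (a : Fin 3) {i : ℕ} (hi : i ≤ n) :
    #{u : SRVert 3 n | u.1 a = i} = n - i + 1 := by
  have hab : a ≠ a + 1 := by fin_cases a <;> decide
  rw [card_eq_sum_card_fiberwise (f := fun u : SRVert 3 n => u.1 (a + 1)) (t := range (n + 1))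
    fun u _ => mem_range_succ_iff.mpr ((u.coord_add_coord_le hab).trans' (Nat.le_add_left _ _))]
  simp only [filter_filter, card_coord_eq_coord_eq hab, sum_boole, Nat.cast_id]
  rw [← card_range (n - i + 1)]
  congr 1
  ext j
  simp only [mem_filter, mem_range]
  omega

end SRVert

section Lines

variable {d n : ℕ}

def lineIndicator (a : Fin d) (i : ℕ) : SRVert d n → ℝ := fun v => if v.1 a = i then 1 else 0

def sameLineMatrix (a : Fin d) : Matrix (SRVert d n) (SRVert d n) ℝ :=
  Matrix.of fun u v => if u.1 a = v.1 a then 1 else 0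

theorem sameLineMatrix_mulVec_lineIndicator_apply (a b : Fin d) (i : ℕ) (v : SRVert d n) :
    (sameLineMatrix b *ᵥ lineIndicator a i) v
      = #{u : SRVert d n | u.1 a = i ∧ u.1 b = v.1 b} := by
  simp only [mulVec, dotProduct, sameLineMatrix, lineIndicator, of_apply, ite_zero_mul_ite_zero,
    mul_one, sum_boole]
  simp_rw [eq_comm (a := v.1 b), and_comm]

end Lines

section Three

variable {n : ℕ}

theorem sameLineMatrix_mulVec_lineIndicator_self (a : Fin 3) {i : ℕ} (hi : i ≤ n) :
    sameLineMatrix (n := n) a *ᵥ lineIndicator a i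
      = ((n - i + 1 : ℕ) : ℝ) • lineIndicator a i := by
  funext v
  rw [sameLineMatrix_mulVec_lineIndicator_apply]
  by_cases hv : v.1 a = i
  · simp [hv, lineIndicator, SRVert.card_coord_eq a hi]
  · have hempty : ∀ u : SRVert 3 n, ¬(u.1 a = i ∧ u.1 a = v.1 a) := fun u h => hv (h.2 ▸ h.1)
    simp [hv, hempty, lineIndicator]

theorem sameLineMatrix_mulVec_lineIndicator_of_ne {a b : Fin 3} (hab : a ≠ b) {i : ℕ}
    (hi : i ≤ n) :
    sameLineMatrix (n := n) b *ᵥ lineIndicator a i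
      = ∑ j ∈ range (n - i + 1), lineIndicator b j := by
  funext v
  have hrange : i + v.1 b ≤ n ↔ v.1 b ∈ range (n - i + 1) := by rw [mem_range]; omega
  rw [sameLineMatrix_mulVec_lineIndicator_apply, SRVert.card_coord_eq_coord_eq hab]
  simp only [Finset.sum_apply, lineIndicator, sum_ite_eq, hrange, Nat.cast_ite, Nat.cast_one,
    Nat.cast_zero]

theorem SR_three_adj_iff {u v : SRVert 3 n} :
    (SR 3 n).Adj u v ↔ u ≠ v ∧ (u.1 0 = v.1 0 ∨ u.1 1 = v.1 1 ∨ u.1 2 = v.1 2) := by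
  have hu := u.coord_zero_add_one_add_two
  have hv := v.coord_zero_add_one_add_two
  have hne : u ≠ v ↔ ¬(u.1 0 = v.1 0 ∧ u.1 1 = v.1 1 ∧ u.1 2 = v.1 2) := by
    simp [Subtype.ext_iff, funext_iff, Fin.forall_fin_succ]
  change #{k | u.1 k ≠ v.1 k} = 2 ↔ _
  rw [hne, card_filter, Fin.sum_univ_three]
  split_ifs <;> omega

theorem SR_three_adjMatrix_eq :
    (SR 3 n).adjMatrix ℝ = sameLineMatrix 0 + sameLineMatrix 1 + sameLineMatrix 2 - (3 : ℝ) • 1 := by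
  ext u v
  simp only [SimpleGraph.adjMatrix_apply, SR_three_adj_iff, Matrix.sub_apply, Matrix.add_apply,
    Matrix.smul_apply, one_apply, sameLineMatrix, of_apply, smul_eq_mul]
  by_cases huv : u = v
  · subst huv
    norm_num
  · have agree_at_most_one {a b : Fin 3} (hab : a ≠ b) : ¬(u.1 a = v.1 a ∧ u.1 b = v.1 b) :=
      fun h => huv (SRVert.eq_of_coord_eq_of_coord_eq hab h.1 h.2)
    have h01 := agree_at_most_one (a := 0) (b := 1) (by decide)
    have h02 := agree_at_most_one (a := 0) (b := 2) (by decide)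
    have h12 := agree_at_most_one (a := 1) (b := 2) (by decide)
    split_ifs <;> simp_all

end Three

/-- `A X_i = (n-i-2) X_i + ∑_{j=0}^{n-i} (Y_j + Z_j)`. -/
theorem adj_mulVec_X (n i : ℕ) (hi : i ≤ n) :
    ((SR 3 n).adjMatrix ℝ).mulVec (Xv n i)
      = ((n : ℝ) - i - 2) • Xv n i + ∑ j ∈ Finset.range (n - i + 1), (Yv n j + Zv n j) := by
  change _ *ᵥ lineIndicator 0 i
    = _ • lineIndicator 0 i + ∑ j ∈ _, (lineIndicator 1 j + lineIndicator 2 j)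
  rw [SR_three_adjMatrix_eq, sub_mulVec, add_mulVec, add_mulVec, smul_mulVec, one_mulVec,
    sameLineMatrix_mulVec_lineIndicator_self 0 hi,
    sameLineMatrix_mulVec_lineIndicator_of_ne (by decide : (0 : Fin 3) ≠ 1) hi,
    sameLineMatrix_mulVec_lineIndicator_of_ne (by decide : (0 : Fin 3) ≠ 2) hi, sum_add_distrib]
  push_cast [hi]
  module
end

section
/- Fix d >= 1 and n >= 0. The number of lattice points p (in Z^d if d is odd, in (Z+1/2)^d if d is even) such that all d! points {p + sigma(s) : sigma in S_d} lie in V(d,n), where s = ((1-d)/2, (3-d)/2, ..., (d-1)/2) is the standard offset vector, equals binomial(n - (d-1)(d-2)/2, d-1). -/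
open Finset

/-- The standard offset vector, whose `i`-th coordinate (`0`-indexed) is
`(2(i+1) - 1 - d)/2`. -/
noncomputable def soff (d : ℕ) : Fin d → ℝ := fun i => (2*(i : ℝ) + 1 - d)/2

lemma sum_soff (d : ℕ) (hd : 1 ≤ d) : ∑ i, soff d i = 0 := by
  have hS : (∑ i ∈ Finset.range d, (i:ℝ)) * 2 = (d:ℝ) * ((d:ℝ) - 1) := by
    have h := Finset.sum_range_id_mul_two d
    have h2 : (((∑ i ∈ Finset.range d, i) * 2 : ℕ) : ℝ) = ((d * (d-1) : ℕ) : ℝ) := by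
      exact_mod_cast congrArg (fun x : ℕ => (x:ℝ)) h
    push_cast [Nat.cast_sub hd] at h2
    simpa using h2
  simp only [soff]
  rw [Fin.sum_univ_eq_sum_range (fun i => (2*(i:ℝ)+1-(d:ℝ))/2)]
  have hc : ∀ i ∈ Finset.range d, (2*(i:ℝ)+1-(d:ℝ))/2 = (i:ℝ) + (1-(d:ℝ))/2 := by
    intro i _; ring
  rw [Finset.sum_congr rfl hc, Finset.sum_add_distrib, Finset.sum_const, Finset.card_range,
    nsmul_eq_mul]
  linear_combination hS / 2

/-- the number of centers `p` (integer points for odd `d`,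
half-integer points for even `d`) whose standard lattice permutohedron
`{p + σ(s) : σ ∈ S_d}` lies entirely in `V(d,n)` is
`binom(n - (d-1)(d-2)/2, d-1)`. -/
theorem count_permutohedron_centers (d n : ℕ) (hd : 1 ≤ d) :
    Set.ncard {p : Fin d → ℝ |
        (if Even d then ∀ i, ∃ z : ℤ, p i = z + 1/2 else ∀ i, ∃ z : ℤ, p i = z) ∧
        ∀ σ : Equiv.Perm (Fin d),
          (∀ i, ∃ m : ℕ, p i + soff d (σ⁻¹ i) = m) ∧
          ∑ i, (p i + soff d (σ⁻¹ i)) = n}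
      = (n - (d-1)*(d-2)/2).choose (d-1) := by
  haveI : NeZero d := ⟨by omega⟩
  have hsoff0 : soff d 0 = (1-(d:ℝ))/2 := by
    simp [soff]
  have hsum_soff := sum_soff d hd
  set g : (Fin d → ℕ) → (Fin d → ℝ) := fun q i => (q i : ℝ) + ((d:ℝ)-1)/2 with hg
  have hg_inj : Function.Injective g := by
    intro q q' h
    funext i
    have := congrFun h i
    simp only [hg] at this
    have h2 : (q i : ℝ) = q' i := by linarith
    exact_mod_cast h2
  have key : {p : Fin d → ℝ |
        (if Even d then ∀ i, ∃ z : ℤ, p i = z + 1/2 else ∀ i, ∃ z : ℤ, p i = z) ∧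
        ∀ σ : Equiv.Perm (Fin d),
          (∀ i, ∃ m : ℕ, p i + soff d (σ⁻¹ i) = m) ∧
          ∑ i, (p i + soff d (σ⁻¹ i)) = n}
      = g '' {q : Fin d → ℕ | (∑ i, q i) * 2 + d*(d-1) = 2*n} := by
    ext p
    simp only [Set.mem_setOf_eq, Set.mem_image]
    constructor
    · rintro ⟨hpar, hσ⟩
      have h0 : ∀ i, ∃ m : ℕ, p i = m + ((d:ℝ)-1)/2 := by
        intro i
        obtain ⟨m, hm⟩ := (hσ (Equiv.swap i 0)).1 i
        refine ⟨m, ?_⟩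
        rw [Equiv.swap_inv, Equiv.swap_apply_left, hsoff0] at hm
        linarith
      choose q hq using h0
      have hsum := (hσ 1).2
      simp only [inv_one, Equiv.Perm.coe_one, id_eq] at hsum
      rw [Finset.sum_add_distrib, hsum_soff, add_zero] at hsum
      have hsq : (∑ i, (q i:ℝ)) + (d:ℝ) * (((d:ℝ)-1)/2) = n := by
        rw [← hsum, Finset.sum_congr rfl (fun i _ => hq i), Finset.sum_add_distrib,
          Finset.sum_const, Finset.card_univ, Fintype.card_fin, nsmul_eq_mul]
      refine ⟨q, ?_, ?_⟩
      · have hcast : (((∑ i, q i) * 2 + d*(d-1) : ℕ) : ℝ) = ((2*n : ℕ) : ℝ) := by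
          push_cast [Nat.cast_sub hd]
          linear_combination 2 * hsq
        exact_mod_cast hcast
      · funext i
        simp only [hg]
        rw [hq i]
    · rintro ⟨q, hq, rfl⟩
      have hqr : (∑ i, (q i:ℝ)) * 2 + (d:ℝ)*((d:ℝ)-1) = 2*(n:ℝ) := by
        have := congrArg (fun x : ℕ => (x:ℝ)) hq
        push_cast [Nat.cast_sub hd] at this
        linarith [this]
      constructor
      · split_ifs with he
        · intro i
          obtain ⟨k, hk⟩ := he
          refine ⟨(q i : ℤ) + k - 1, ?_⟩
          simp only [hg]
          subst hk
          push_cast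
          ring
        · intro i
          obtain ⟨k, hk⟩ := Nat.odd_iff.mpr (Nat.not_even_iff.mp he)
          refine ⟨(q i : ℤ) + k, ?_⟩
          simp only [hg]
          subst hk
          push_cast
          ring
      · intro σ
        constructor
        · intro i
          refine ⟨q i + (σ⁻¹ i : Fin d).val, ?_⟩
          simp only [hg, soff]
          push_cast
          ring
        · rw [Finset.sum_add_distrib, Equiv.sum_comp σ⁻¹ (soff d), hsum_soff, add_zero]
          simp only [hg]
          rw [Finset.sum_add_distrib, Finset.sum_const, Finset.card_univ, Fintype.card_fin,
            nsmul_eq_mul]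
          linarith [hqr]
  rw [key, Set.ncard_image_of_injective _ hg_inj]
  -- arithmetic facts
  have hdvd1 : 2 ∣ (d-1)*(d-2) := by
    rcases Nat.even_or_odd (d-1) with h | h
    · exact Dvd.dvd.mul_right h.two_dvd _
    · have h2 : Even (d-2) := by
        have := Nat.Odd.sub_odd h odd_one
        simpa [show d-1-1 = d-2 from by omega] using this
      exact Dvd.dvd.mul_left h2.two_dvd _
  have hdvd2 : 2 ∣ d*(d-1) := by
    rcases Nat.even_or_odd d with h | h
    · exact Dvd.dvd.mul_right h.two_dvd _
    · have h2 : Even (d-1) := Nat.Odd.sub_odd h odd_one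
      exact Dvd.dvd.mul_left h2.two_dvd _
  have hE1 : (d-1)*(d-2)/2 * 2 = (d-1)*(d-2) := Nat.div_mul_cancel hdvd1
  have hE2 : d*(d-1)/2 * 2 = d*(d-1) := Nat.div_mul_cancel hdvd2
  have hrel : d*(d-1) = (d-1)*(d-2) + 2*(d-1) := by
    rcases d with _ | _ | e
    · omega
    · omega
    · have h1 : e + 1 + 1 - 1 = e + 1 := rfl
      have h2 : e + 1 + 1 - 2 = e := rfl
      rw [h1, h2]
      ring
  have hd1 : d = 1 → (d-1)*(d-2) = 0 := by intro h; subst h; rfl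
  obtain ⟨P, hP⟩ : ∃ P, (d-1)*(d-2) = P := ⟨_, rfl⟩
  obtain ⟨Q, hQ⟩ : ∃ Q, d*(d-1) = Q := ⟨_, rfl⟩
  rw [hP] at hE1 hrel hd1 ⊢
  rw [hQ] at hE2 hrel ⊢
  by_cases hle : Q ≤ 2*n
  · set m : ℕ := n - Q/2 with hm
    have hTm : {q : Fin d → ℕ | (∑ i, q i) * 2 + Q = 2*n}
        = {q : Fin d → ℕ | ∑ i, q i = m} := by
      ext q
      simp only [Set.mem_setOf_eq, hm]
      omega
    rw [hTm]
    have hcard : ({q : Fin d → ℕ | ∑ i, q i = m} : Set (Fin d → ℕ)).ncard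
        = (d + m - 1).choose m := by
      rw [← Nat.card_coe_set_eq]
      calc Nat.card {q : Fin d → ℕ | ∑ i, q i = m}
          = Nat.card (Sym (Fin d) m) :=
            Nat.card_congr (Equiv.symm (Sym.equivNatSumOfFintype (Fin d) m))
        _ = Fintype.card (Sym (Fin d) m) := Nat.card_eq_fintype_card
        _ = (Fintype.card (Fin d) + m - 1).choose m := Sym.card_sym_eq_choose m
        _ = (d + m - 1).choose m := by rw [Fintype.card_fin]
    rw [hcard]
    clear hcard
    have heq : n - P/2 = m + (d-1) := by
      simp only [hm]
      omega
    have heq2 : d + m - 1 = m + (d-1) := by omega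
    rw [heq, heq2]
    have := Nat.choose_symm (Nat.le_add_right m (d-1))
    rw [Nat.add_sub_cancel_left] at this
    omega
  · have hempty : {q : Fin d → ℕ | (∑ i, q i) * 2 + Q = 2*n} = ∅ := by
      ext q
      simp only [Set.mem_setOf_eq, Set.mem_empty_iff_false, iff_false]
      intro h
      omega
    rw [hempty, Set.ncard_empty]
    symm
    apply Nat.choose_eq_zero_of_lt
    omega
end
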